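/- The set of solutions (p2, p3, p4, p5, p6, p15, p10, p12, p41, p43, p45, p119) ∈ ℚ^12 with all coordinates nonzero of the system p41 = p10^3·p12, p43 = p10^2·p12^2, p45 = p10·p12^3, p119 = p41·p43·p10^2·p12^3, p119 = p10^12, p119 = p12^10, p119 = p2^60, p119 = p3^40, p119 = p4^30, p119 = p5^20, p119 = p6^20, p119 = p15^8 forms, under componentwise multiplication, a group of order exactly 128 in which every element squares to the identity; hence it is isomorphic to (ℤ/2ℤ)^7. -/

import Mathlib

/-!
Substituting p41 and p43 into p119 = p41·p43·p10²·p12³ gives p119 = p10⁷·p12⁶; together with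
p119 = p10¹² = p12¹⁰ this yields p12⁶ = p10⁵ and then p10¹¹ = 1, so p10 = 1 in ℚ. Hence p119 = 1,
every other coordinate is a root of unity in ℚ, i.e. ±1, p43 = p12² = 1 and p41 = p45 = p12.
The solutions are therefore exactly the sign patterns on the seven free coordinates
p2, p3, p4, p5, p6, p15, p12, a copy of (ℤ/2ℤ)⁷.
-/

open Function

section Sign

variable (R : Type*) [Ring R]

def zmodTwoSign (c : ZMod 2) : Rˣ := (-1) ^ c.val

variable {R}

@[simp] lemma zmodTwoSign_zero : zmodTwoSign R 0 = 1 := pow_zero _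

@[simp] lemma zmodTwoSign_one : zmodTwoSign R 1 = -1 := pow_one _

lemma zmodTwoSign_add (a b : ZMod 2) :
    zmodTwoSign R (a + b) = zmodTwoSign R a * zmodTwoSign R b := by
  ext
  push_cast [zmodTwoSign, ZMod.val_add]
  rw [← pow_add, ← neg_one_pow_eq_pow_mod_two]

lemma zmodTwoSign_sq (c : ZMod 2) : zmodTwoSign R c ^ 2 = 1 := by
  rw [zmodTwoSign, ← pow_mul, pow_mul', neg_one_sq, one_pow]

end Sign

lemma pow_eq_one_of_sq_eq_one {M : Type*} [Monoid M] {x : M} {n : ℕ} (hx : x ^ 2 = 1)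
    (hn : Even n) : x ^ n = 1 := by
  obtain ⟨k, rfl⟩ := hn
  rw [← two_mul, pow_mul, hx, one_pow]

section LinearOrderedRing

variable {R : Type*} [Ring R] [LinearOrder R] [IsStrictOrderedRing R] {u : Rˣ} {n : ℕ}

lemma Units.pow_eq_one_iff_of_ne_zero (hn : n ≠ 0) :
    u ^ n = 1 ↔ u = 1 ∨ u = -1 ∧ Even n := by
  simp only [Units.ext_iff, Units.val_pow_eq_pow_val, Units.val_one, Units.val_neg]
  exact _root_.pow_eq_one_iff_of_ne_zero hn

lemma Units.eq_one_of_pow_eq_one_of_odd (hn : Odd n) (hu : u ^ n = 1) : u = 1 :=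
  ((Units.pow_eq_one_iff_of_ne_zero hn.pos.ne').mp hu).resolve_right fun h ↦
    Nat.not_even_iff_odd.mpr hn h.2

lemma Units.sq_eq_one_of_pow_eq_one (hn : n ≠ 0) (hu : u ^ n = 1) : u ^ 2 = 1 := by
  obtain rfl | ⟨rfl, -⟩ := (Units.pow_eq_one_iff_of_ne_zero hn).mp hu <;> simp

lemma zmodTwoSign_injective : Injective (zmodTwoSign R) := by
  have hne : zmodTwoSign R 1 ≠ zmodTwoSign R 0 := by
    simpa [Units.ext_iff] using (neg_one_lt_zero.trans (zero_lt_one' R)).ne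
  have hcases : ∀ c : ZMod 2, c = 0 ∨ c = 1 := by decide
  intro a b h
  rcases hcases a with rfl | rfl <;> rcases hcases b with rfl | rfl
  exacts [rfl, absurd h.symm hne, absurd h hne, rfl]

lemma exists_zmodTwoSign_eq (hu : u ^ 2 = 1) : ∃ c, zmodTwoSign R c = u := by
  obtain rfl | ⟨rfl, -⟩ := (Units.pow_eq_one_iff_of_ne_zero two_ne_zero).mp hu
  exacts [⟨0, zmodTwoSign_zero⟩, ⟨1, zmodTwoSign_one⟩]

end LinearOrderedRing

lemma pow_eleven_eq_one_of_relations {G : Type*} [CommGroup G] {a b : G}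
    (h₁ : a ^ 12 = a ^ 7 * b ^ 6) (h₂ : a ^ 12 = b ^ 10) : a ^ 11 = 1 := by
  have hb : b ^ 6 = a ^ 5 := mul_left_cancel (h₁.symm.trans (pow_add a 7 5))
  refine mul_eq_left.mp (?_ : a ^ 25 * a ^ 11 = a ^ 25)
  calc a ^ 25 * a ^ 11 = (a ^ 12) ^ 3 := by rw [← pow_add, ← pow_mul]
    _ = (b ^ 6) ^ 5 := by rw [h₂, ← pow_mul, ← pow_mul]
    _ = a ^ 25 := by rw [hb, ← pow_mul]

def coherentTuples : Set (Fin 12 → ℚˣ) :=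
  {p | p 8 = p 6 ^ 3 * p 7 ∧ p 9 = p 6 ^ 2 * p 7 ^ 2 ∧ p 10 = p 6 * p 7 ^ 3 ∧
    p 11 = p 8 * p 9 * p 6 ^ 2 * p 7 ^ 3 ∧ p 11 = p 6 ^ 12 ∧ p 11 = p 7 ^ 10 ∧
    p 11 = p 0 ^ 60 ∧ p 11 = p 1 ^ 40 ∧ p 11 = p 2 ^ 30 ∧ p 11 = p 3 ^ 20 ∧ p 11 = p 4 ^ 20 ∧
    p 11 = p 5 ^ 8}

def signNormalForms : Set (Fin 12 → ℚˣ) :=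
  {p | (∀ i, p i ^ 2 = 1) ∧ p 6 = 1 ∧ p 9 = 1 ∧ p 11 = 1 ∧ p 8 = p 7 ∧ p 10 = p 7}

lemma coherentTuples_subset_signNormalForms : coherentTuples ⊆ signNormalForms := by
  rintro p ⟨h8, h9, h10, h11, h11_6, h11_7, h11_0, h11_1, h11_2, h11_3, h11_4, h11_5⟩
  have h6 : p 6 = 1 := by
    refine Units.eq_one_of_pow_eq_one_of_odd (n := 11) (by decide) <|
      pow_eleven_eq_one_of_relations (b := p 7) ?_ (h11_6.symm.trans h11_7)
    rw [← h11_6, h11, h8, h9]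
    ext; push_cast; ring
  have h11' : p 11 = 1 := by rw [h11_6, h6, one_pow]
  have hsq : ∀ {i n}, n ≠ 0 → p 11 = p i ^ n → p i ^ 2 = 1 := fun hn h ↦
    Units.sq_eq_one_of_pow_eq_one hn (h.symm.trans h11')
  have h7 : p 7 ^ 2 = 1 := hsq (by norm_num) h11_7
  have h8' : p 8 = p 7 := by rw [h8, h6, one_pow, one_mul]
  have h9' : p 9 = 1 := by rw [h9, h6, one_pow, one_mul, h7]
  have h10' : p 10 = p 7 := by rw [h10, h6, one_mul, pow_succ, h7, one_mul]
  refine ⟨fun i ↦ ?_, h6, h9', h11', h8', h10'⟩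
  fin_cases i
  exacts [hsq (by norm_num) h11_0, hsq (by norm_num) h11_1, hsq (by norm_num) h11_2,
    hsq (by norm_num) h11_3, hsq (by norm_num) h11_4, hsq (by norm_num) h11_5,
    by simp [h6], h7, by simp [h8', h7], by simp [h9'], by simp [h10', h7], by simp [h11']]

lemma signNormalForms_subset_coherentTuples : signNormalForms ⊆ coherentTuples := by
  rintro p ⟨hsq, h6, h9, h11, h8, h10⟩
  have hev : ∀ i {n}, Even n → p i ^ n = 1 := fun i _ hn ↦ pow_eq_one_of_sq_eq_one (hsq i) hn
  simp only [coherentTuples, Set.mem_ofPred_eq, h6, h9, h11, h8, h10, one_pow, one_mul, mul_one]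
  refine ⟨trivial, (hsq 7).symm, by rw [pow_succ, hsq 7, one_mul],
    by rw [← pow_succ', hev 7 (n := 4) (by decide)], trivial, ?_, ?_, ?_, ?_, ?_, ?_, ?_⟩ <;>
  exact (hev _ (by decide)).symm

lemma coherentTuples_eq_signNormalForms : coherentTuples = signNormalForms :=
  coherentTuples_subset_signNormalForms.antisymm signNormalForms_subset_coherentTuples

/-- The free signs are those of p2, p3, p4, p5, p6, p15, p12 (indices 0–5 and 7); p41 and p45
(indices 8 and 10) repeat the sign of p12. -/
def spreadSigns (c : Fin 7 → ZMod 2) : Fin 12 → ZMod 2 :=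
  ![c 0, c 1, c 2, c 3, c 4, c 5, 0, c 6, c 6, 0, c 6, 0]

lemma spreadSigns_add (c d : Fin 7 → ZMod 2) :
    spreadSigns (c + d) = spreadSigns c + spreadSigns d := by
  ext j
  fin_cases j <;> simp [spreadSigns]

def signParametrization : Multiplicative (Fin 7 → ZMod 2) →* (Fin 12 → ℚˣ) where
  toFun c j := zmodTwoSign ℚ (spreadSigns c.toAdd j)
  map_one' := by
    ext j
    fin_cases j <;> simp [spreadSigns]
  map_mul' c d := by
    ext j
    simp only [toAdd_mul, spreadSigns_add, Pi.add_apply, zmodTwoSign_add, Pi.mul_apply]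

lemma signParametrization_injective : Injective signParametrization := by
  intro c d h
  have hj : ∀ j, spreadSigns c.toAdd j = spreadSigns d.toAdd j := fun j ↦
    zmodTwoSign_injective (congrFun h j)
  ext i
  fin_cases i
  exacts [hj 0, hj 1, hj 2, hj 3, hj 4, hj 5, hj 7]

lemma range_signParametrization :
    (signParametrization.range : Set (Fin 12 → ℚˣ)) = signNormalForms := by
  ext p
  constructor
  · rintro ⟨c, rfl⟩
    exact ⟨fun j ↦ zmodTwoSign_sq _, zmodTwoSign_zero, zmodTwoSign_zero, zmodTwoSign_zero,
      rfl, rfl⟩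
  · rintro ⟨hsq, h6, h9, h11, h8, h10⟩
    choose c hc using fun j ↦ exists_zmodTwoSign_eq (hsq j)
    refine ⟨Multiplicative.ofAdd ![c 0, c 1, c 2, c 3, c 4, c 5, c 7], funext fun j ↦ ?_⟩
    fin_cases j
    exacts [hc 0, hc 1, hc 2, hc 3, hc 4, hc 5, zmodTwoSign_zero.trans h6.symm, hc 7,
      (hc 7).trans h8.symm, zmodTwoSign_zero.trans h9.symm, (hc 7).trans h10.symm,
      zmodTwoSign_zero.trans h11.symm]

theorem stmt_10 :
    ∃ H : Subgroup (Fin 12 → ℚˣ),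
      (H : Set (Fin 12 → ℚˣ)) =
        {p : Fin 12 → ℚˣ | p 8 = p 6 ^ 3 * p 7 ∧
        p 9 = p 6 ^ 2 * p 7 ^ 2 ∧
        p 10 = p 6 * p 7 ^ 3 ∧
        p 11 = p 8 * p 9 * p 6 ^ 2 * p 7 ^ 3 ∧
        p 11 = p 6 ^ 12 ∧
        p 11 = p 7 ^ 10 ∧
        p 11 = p 0 ^ 60 ∧
        p 11 = p 1 ^ 40 ∧
        p 11 = p 2 ^ 30 ∧
        p 11 = p 3 ^ 20 ∧
        p 11 = p 4 ^ 20 ∧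
        p 11 = p 5 ^ 8} ∧
      Nat.card H = 128 ∧
      (∀ x ∈ H, x * x = 1) ∧
      Nonempty (H ≃* Multiplicative (Fin 7 → ZMod 2)) := by
  let e := MonoidHom.ofInjective signParametrization_injective
  refine ⟨signParametrization.range,
    range_signParametrization.trans coherentTuples_eq_signNormalForms.symm, ?_, ?_, ⟨e.symm⟩⟩
  · rw [Nat.card_congr e.symm.toEquiv]
    simp
  · rintro _ ⟨c, rfl⟩
    rw [← map_mul, show c * c = 1 from CharTwo.add_self_eq_zero c.toAdd, map_one]
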